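/- Let R be a commutative ring and F a formal group law over R with formal inverse ι. Then ι(ι(X)) = X in R[[X]], and consequently −ι(X)·ι(ι(X)) = −X·ι(X); hence the unique composable power series φ with φ(−X·ι(X)) = −ι(X)·ι(ι(X)) is the identity series φ(T) = T, which coincides with the series associated in the same way to the identity morphism of F. (In particular the functor N from formal group laws to 2-valued formal groups of type I is not faithful.) -/

import Mathlib

noncomputable section

/-- The weight (total degree) of a multi-exponent. -/
def wt {τ : Type*} (d : τ →₀ ℕ) : ℕ := d.sum fun _ e => e

/-- Substitution of a family of multivariate power series (each having zero constant
coefficient) into a multivariate power series in finitely many variables.  The coefficient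
of the result in multidegree `d` is computed from a sufficiently large truncation of `f`;
this agrees with the usual substitution whenever every `a i` has zero constant coefficient. -/
def msubst {R : Type*} [CommRing R] {k : ℕ} {τ : Type*}
    (a : Fin k → MvPowerSeries τ R) (f : MvPowerSeries (Fin k) R) : MvPowerSeries τ R :=
  fun d => MvPowerSeries.coeff d
    (MvPolynomial.eval₂ (MvPowerSeries.C : R →+* MvPowerSeries τ R) a
      (MvPowerSeries.trunc R (Finsupp.equivFunOnFinite.symm fun _ => wt d + 1) f))

/-- Substitution of a multivariate power series with zero constant coefficient into a
one-variable power series. -/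
def psubst {R : Type*} [CommRing R] {τ : Type*}
    (a : MvPowerSeries τ R) (f : PowerSeries R) : MvPowerSeries τ R :=
  fun d => MvPowerSeries.coeff d
    (Polynomial.eval₂ (MvPowerSeries.C : R →+* MvPowerSeries τ R) a (PowerSeries.trunc (wt d + 1) f))

/-- A (one-dimensional, commutative) formal group law over `R`:
`F(X,0) = X`, `F(0,Y) = Y`, `F(X,Y) = F(Y,X)` and `F(F(X,Y),Z) = F(X,F(Y,Z))`. -/
structure IsFGL {R : Type*} [CommRing R] (F : MvPowerSeries (Fin 2) R) : Prop where
  zero_right : msubst ![MvPowerSeries.X 0, 0] F = (MvPowerSeries.X 0 : MvPowerSeries (Fin 2) R)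
  zero_left : msubst ![0, MvPowerSeries.X 1] F = (MvPowerSeries.X 1 : MvPowerSeries (Fin 2) R)
  comm : msubst ![MvPowerSeries.X 1, MvPowerSeries.X 0] F = F
  assoc : msubst ![msubst ![(MvPowerSeries.X 0 : MvPowerSeries (Fin 3) R), MvPowerSeries.X 1] F,
        MvPowerSeries.X 2] F
      = msubst ![(MvPowerSeries.X 0 : MvPowerSeries (Fin 3) R),
        msubst ![MvPowerSeries.X 1, MvPowerSeries.X 2] F] F

/-- `ι` is the formal inverse of the formal group law `F`: it is composable and
`F(X, ι(X)) = 0` in `R[[X]]`. -/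
def IsFormalInverse {R : Type*} [CommRing R] (F : MvPowerSeries (Fin 2) R)
    (ι : PowerSeries R) : Prop :=
  PowerSeries.constantCoeff ι = 0 ∧
    msubst ![(PowerSeries.X : PowerSeries R), ι] F = 0

end

/-!
On composable arguments the truncation-based substitutions `msubst` and `psubst` agree with
Mathlib's `MvPowerSeries.subst` and `PowerSeries.subst`: the part of `f` they discard has order
larger than the degree of the coefficient being computed, and substitution of composable series
does not lower the order.

For genuine substitution, evaluating associativity at `(X, ι, ι(ι))` gives
`ι(ι) = F(F(X, ι), ι(ι)) = F(X, F(ι, ι(ι))) = X`, since `F(X, ι) = 0` and `F(ι, ι(ι)) = 0` is the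
same identity with `ι` substituted for `X`.

Writing `ι = X·u`, the identity `ι(ι) = X` reads `X·u·u(ι) = X`, so `u` is a unit and
`−X·ι = X²·(−u)`. Substituting `Xⁿ·v` with `v` a unit and `n ≥ 1` is injective: the lowest term
`c Xᵐ` of a nonzero series becomes `c·v(0)ᵐ X^{nm}`. Hence `φ(−X·ι) = −X·ι = X(−X·ι)` forces
`φ = X`.
-/

open MvPowerSeries

section Substitution

variable {R : Type*} [CommRing R] {σ τ : Type*}

lemma MvPowerSeries.lt_order_sub_trunc [Finite σ] [Nonempty σ] [DecidableEq σ]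
    (f : MvPowerSeries σ R) (n : ℕ) :
    (n : ℕ∞) < (f - trunc R (Finsupp.equivFunOnFinite.symm fun _ => n + 1) f).order := by
  refine (ENat.natCast_lt_natCast.2 n.lt_succ_self).trans_le (nat_le_order fun d hd => ?_)
  have hd' : ∀ i, d i < n + 1 := fun i => (Finsupp.le_degree i d).trans_lt hd
  have hlt : d < Finsupp.equivFunOnFinite.symm fun _ => n + 1 :=
    Finsupp.lt_def.2 ⟨fun i => (hd' i).le, Classical.arbitrary σ, hd' _⟩
  rw [map_sub, MvPolynomial.coeff_coe, coeff_trunc, if_pos hlt, sub_self]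

lemma MvPowerSeries.coeff_subst_eq_zero_of_lt_order [Finite σ] {a : σ → MvPowerSeries τ R}
    (ha : ∀ i, constantCoeff (a i) = 0) {f : MvPowerSeries σ R} {d : τ →₀ ℕ}
    (hd : d.degree < f.order) : coeff d (f.subst a) = 0 := by
  refine coeff_of_lt_order (hd.trans_le ?_)
  refine le_trans ?_ (le_order_subst (hasSubst_of_constantCoeff_zero ha) f)
  refine le_mul_of_one_le_left bot_le (le_iInf fun i => ?_)
  exact Order.one_le_iff_ne_zero.2 (order_ne_zero_iff_constCoeff_eq_zero.2 (ha i))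

/- For `k = 0` the truncation in `msubst` is always `0`, whence `[NeZero k]`. -/
theorem msubst_eq_subst {k : ℕ} [NeZero k] {a : Fin k → MvPowerSeries τ R}
    (ha : ∀ i, constantCoeff (a i) = 0) (f : MvPowerSeries (Fin k) R) :
    msubst a f = f.subst a := by
  ext d
  set p := trunc R (Finsupp.equivFunOnFinite.symm fun _ => wt d + 1) f
  have hp : coeff d (msubst a f) = coeff d ((p : MvPowerSeries (Fin k) R).subst a) := by
    rw [subst_coe, MvPolynomial.aeval_def, ← c_eq_algebraMap, coeff_apply (msubst a f)]
    rfl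
  have htail := coeff_subst_eq_zero_of_lt_order ha (lt_order_sub_trunc f (wt d))
  rw [subst_sub (hasSubst_of_constantCoeff_zero ha), map_sub, sub_eq_zero] at htail
  exact hp.trans htail.symm

theorem psubst_eq_subst {a : MvPowerSeries τ R} (ha : constantCoeff a = 0) (f : PowerSeries R) :
    psubst a f = f.subst a := by
  have hsubst := PowerSeries.HasSubst.of_constantCoeff_zero ha
  ext d
  set p := PowerSeries.trunc (wt d + 1) f
  have hp : coeff d (psubst a f) = coeff d ((p : PowerSeries R).subst a) := by
    rw [PowerSeries.subst_coe hsubst, Polynomial.aeval_def, ← c_eq_algebraMap,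
      coeff_apply (psubst a f)]
    rfl
  have hord : (wt d : ℕ∞) < (f - p).order := by
    refine (ENat.natCast_lt_natCast.2 (wt d).lt_succ_self).trans_le
      (PowerSeries.nat_le_order _ _ fun i hi => ?_)
    rw [map_sub, Polynomial.coeff_coe, PowerSeries.coeff_trunc, if_pos hi, sub_self]
  have htail := coeff_of_lt_order (hord.trans_le (PowerSeries.le_order_subst_left ha))
  rw [PowerSeries.subst_sub hsubst, map_sub, sub_eq_zero] at htail
  exact hp.trans htail.symm

lemma MvPowerSeries.subst_zero {c : σ → MvPowerSeries τ R} (hc : HasSubst c) :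
    (0 : MvPowerSeries σ R).subst c = 0 := by
  rw [← coe_substAlgHom hc, map_zero]

lemma MvPowerSeries.hasSubst_pair {a b : MvPowerSeries τ R} (ha : constantCoeff a = 0)
    (hb : constantCoeff b = 0) : HasSubst ![a, b] :=
  hasSubst_of_constantCoeff_zero (Fin.forall_fin_two.2 ⟨ha, hb⟩)

lemma msubst_pair_eq_subst {a b : MvPowerSeries τ R} (ha : constantCoeff a = 0)
    (hb : constantCoeff b = 0) (f : MvPowerSeries (Fin 2) R) :
    msubst ![a, b] f = f.subst ![a, b] :=
  msubst_eq_subst (Fin.forall_fin_two.2 ⟨ha, hb⟩) f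

lemma MvPowerSeries.constantCoeff_subst_pair {f : MvPowerSeries (Fin 2) R}
    (hf : constantCoeff f = 0) {a b : MvPowerSeries τ R} (ha : constantCoeff a = 0)
    (hb : constantCoeff b = 0) : constantCoeff (f.subst ![a, b]) = 0 :=
  constantCoeff_subst_eq_zero (hasSubst_pair ha hb) (Fin.forall_fin_two.2 ⟨ha, hb⟩) hf

lemma MvPowerSeries.subst_comp_subst_pair {a b : MvPowerSeries σ R} (ha : constantCoeff a = 0)
    (hb : constantCoeff b = 0) {c : σ → MvPowerSeries τ R} (hc : HasSubst c)
    (f : MvPowerSeries (Fin 2) R) :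
    (f.subst ![a, b]).subst c = f.subst ![a.subst c, b.subst c] := by
  rw [subst_comp_subst_apply (hasSubst_pair ha hb) hc]
  congr 1
  ext i
  fin_cases i <;> rfl

end Substitution

namespace IsFGL

variable {R : Type*} [CommRing R] {τ : Type*} {F : MvPowerSeries (Fin 2) R}

lemma subst_zero_right (hF : IsFGL F) {a : MvPowerSeries τ R} (ha : constantCoeff a = 0) :
    F.subst ![a, 0] = a := by
  have hc := hasSubst_pair ha (map_zero _)
  have h := congrArg (subst ![a, 0]) hF.zero_right
  rwa [msubst_pair_eq_subst (constantCoeff_X 0) (map_zero _),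
    subst_comp_subst_pair (constantCoeff_X 0) (map_zero _) hc, subst_X hc, subst_zero hc] at h

lemma subst_zero_left (hF : IsFGL F) {a : MvPowerSeries τ R} (ha : constantCoeff a = 0) :
    F.subst ![0, a] = a := by
  have hc := hasSubst_pair (map_zero _) ha
  have h := congrArg (subst ![0, a]) hF.zero_left
  rwa [msubst_pair_eq_subst (map_zero _) (constantCoeff_X 1),
    subst_comp_subst_pair (map_zero _) (constantCoeff_X 1) hc, subst_X hc, subst_zero hc] at h

lemma constantCoeff_eq_zero (hF : IsFGL F) : constantCoeff F = 0 := by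
  have h := hF.subst_zero_right (map_zero (constantCoeff (σ := Unit) (R := R)))
  rw [show (![0, 0] : Fin 2 → MvPowerSeries Unit R) = 0 from by ext i; fin_cases i <;> rfl,
    subst_zero_eq_C_constantCoeff] at h
  simpa using congrArg constantCoeff h

lemma subst_assoc (hF : IsFGL F) {a b c : MvPowerSeries τ R} (ha : constantCoeff a = 0)
    (hb : constantCoeff b = 0) (hc : constantCoeff c = 0) :
    F.subst ![F.subst ![a, b], c] = F.subst ![a, F.subst ![b, c]] := by
  have hF0 := hF.constantCoeff_eq_zero
  have hX : ∀ i : Fin 3, constantCoeff (X i : MvPowerSeries (Fin 3) R) = 0 := constantCoeff_X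
  have habc : HasSubst ![a, b, c] :=
    hasSubst_of_constantCoeff_zero (Fin.forall_fin_succ.2 ⟨ha, Fin.forall_fin_two.2 ⟨hb, hc⟩⟩)
  have h := congrArg (subst ![a, b, c]) hF.assoc
  simp only [msubst_pair_eq_subst, hX, constantCoeff_subst_pair hF0] at h
  rw [subst_comp_subst_pair (constantCoeff_subst_pair hF0 (hX 0) (hX 1)) (hX 2) habc,
    subst_comp_subst_pair (hX 0) (hX 1) habc,
    subst_comp_subst_pair (hX 0) (constantCoeff_subst_pair hF0 (hX 1) (hX 2)) habc,
    subst_comp_subst_pair (hX 1) (hX 2) habc] at h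
  simpa [subst_X habc] using h

end IsFGL

namespace PowerSeries

variable {R : Type*} [CommRing R]

lemma constantCoeff_subst_of_constantCoeff_zero {τ : Type*} {a : MvPowerSeries τ R}
    (ha : MvPowerSeries.constantCoeff a = 0) (f : R⟦X⟧) :
    MvPowerSeries.constantCoeff (f.subst a) = constantCoeff f := by
  rw [constantCoeff_subst (HasSubst.of_constantCoeff_zero ha), finsum_eq_single _ 0]
  · simp
  · intro d hd
    simp [ha, zero_pow hd]

lemma subst_X_pow_mul_injective {v : R⟦X⟧} (hv : IsUnit v) {n : ℕ} (hn : n ≠ 0) :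
    Function.Injective fun φ : R⟦X⟧ => φ.subst (X ^ n * v) := by
  have hg : constantCoeff (X ^ n * v) = 0 := by simp [hn]
  have hsub := HasSubst.of_constantCoeff_zero' hg
  suffices ∀ φ : R⟦X⟧, φ.subst (X ^ n * v) = 0 → φ = 0 from fun φ ψ h =>
    sub_eq_zero.1 (this _ (by rw [subst_sub hsub]; exact sub_eq_zero.2 h))
  intro φ h
  by_contra hφ
  have hfac : X ^ (n * φ.order.toNat) *
      (v ^ φ.order.toNat * (divXPowOrder φ).subst (X ^ n * v)) = 0 := by
    rw [← h]
    conv_rhs => rw [← X_pow_order_mul_divXPowOrder (f := φ)]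
    rw [subst_mul hsub, subst_pow hsub, subst_X hsub, mul_pow, ← pow_mul, mul_assoc]
  have hw := (hv.pow _).mul_right_eq_zero.1 (X_pow_mul_cancel (hfac.trans (mul_zero _).symm))
  apply hφ
  rw [← constantCoeff_divXPowOrder_eq_zero_iff, ← constantCoeff_subst_of_constantCoeff_zero hg,
    hw, map_zero]

lemma isUnit_of_subst_X_mul_self {u : R⟦X⟧} (h : (X * u).subst (X * u) = X) : IsUnit u := by
  have hsub := HasSubst.of_constantCoeff_zero' (by simp : constantCoeff (X * u) = 0)
  rw [subst_mul hsub, subst_X hsub, mul_assoc] at h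
  exact IsUnit.of_mul_eq_one _ (X_mul_cancel (h.trans (mul_one X).symm))

end PowerSeries

namespace IsFormalInverse

variable {R : Type*} [CommRing R] {τ : Type*} {F : MvPowerSeries (Fin 2) R} {ι : PowerSeries R}

lemma subst_pair_eq_zero (hι : IsFormalInverse F ι) : F.subst ![PowerSeries.X, ι] = 0 := by
  rw [← msubst_pair_eq_subst PowerSeries.constantCoeff_X hι.1]
  exact hι.2

lemma subst_pair_subst_eq_zero (hι : IsFormalInverse F ι) {g : MvPowerSeries τ R}
    (hg : constantCoeff g = 0) : F.subst ![g, ι.subst g] = 0 := by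
  have hsubst : HasSubst fun _ : Unit => g := hasSubst_of_constantCoeff_zero fun _ => hg
  have h := congrArg (PowerSeries.subst g) hι.subst_pair_eq_zero
  rwa [PowerSeries.subst_def, PowerSeries.subst_def,
    subst_comp_subst_pair PowerSeries.constantCoeff_X hι.1 hsubst, subst_zero hsubst,
    ← PowerSeries.subst_def, PowerSeries.subst_X (PowerSeries.HasSubst.of_constantCoeff_zero hg)] at h

lemma subst_self (hF : IsFGL F) (hι : IsFormalInverse F ι) : ι.subst ι = PowerSeries.X := by
  have hιι : constantCoeff (ι.subst ι) = 0 := PowerSeries.constantCoeff_subst_eq_zero hι.1 _ hι.1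
  calc ι.subst ι = F.subst ![0, ι.subst ι] := (hF.subst_zero_left hιι).symm
    _ = F.subst ![F.subst ![PowerSeries.X, ι], ι.subst ι] := by rw [hι.subst_pair_eq_zero]
    _ = F.subst ![PowerSeries.X, F.subst ![ι, ι.subst ι]] :=
      hF.subst_assoc PowerSeries.constantCoeff_X hι.1 hιι
    _ = F.subst ![PowerSeries.X, 0] := by rw [hι.subst_pair_subst_eq_zero hι.1]
    _ = PowerSeries.X := hF.subst_zero_right PowerSeries.constantCoeff_X

lemma eq_X_of_subst_neg_X_mul_eq (hF : IsFGL F) (hι : IsFormalInverse F ι) {φ : PowerSeries R}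
    (h : φ.subst (-(PowerSeries.X * ι)) = -(PowerSeries.X * ι)) : φ = PowerSeries.X := by
  obtain ⟨u, rfl⟩ := PowerSeries.X_dvd_iff.2 hι.1
  have hu : IsUnit u := PowerSeries.isUnit_of_subst_X_mul_self (hι.subst_self hF)
  have hg : -(PowerSeries.X * (PowerSeries.X * u)) = PowerSeries.X ^ 2 * -u := by ring
  refine PowerSeries.subst_X_pow_mul_injective hu.neg two_ne_zero ?_
  simp only [← hg, h]
  rw [PowerSeries.subst_X (PowerSeries.HasSubst.of_constantCoeff_zero' (by simp))]

end IsFormalInverse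

/-- For a formal group law `F` with formal inverse `ι` one has `ι(ι(X)) = X`,
hence `−ι(X)·ι(ι(X)) = −X·ι(X)`, and the unique composable power series `φ` with
`φ(−X·ι(X)) = −ι(X)·ι(ι(X))` is the identity series `φ(T) = T`, which is also the series
associated to the identity morphism of `F` (so the functor `N` is not faithful). -/
theorem stmt_11 {R : Type*} [CommRing R] (F : MvPowerSeries (Fin 2) R) (hF : IsFGL F)
    (ι : PowerSeries R) (hι : IsFormalInverse F ι) :
    psubst ι ι = PowerSeries.X ∧
    -(ι * psubst ι ι) = -(PowerSeries.X * ι) ∧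
    (∀ φ : PowerSeries R, PowerSeries.constantCoeff φ = 0 →
      psubst (-(PowerSeries.X * ι)) φ = -(ι * psubst ι ι) → φ = PowerSeries.X) ∧
    (∀ φ : PowerSeries R, PowerSeries.constantCoeff φ = 0 →
      psubst (-(PowerSeries.X * ι)) φ
          = -(PowerSeries.X * psubst ι (PowerSeries.X : PowerSeries R)) →
        φ = PowerSeries.X) := by
  have hιι : psubst ι ι = PowerSeries.X := by
    rw [psubst_eq_subst hι.1]
    exact hι.subst_self hF
  have hneg : -(ι * psubst ι ι) = -(PowerSeries.X * ι) := by rw [hιι, mul_comm]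
  have hφ : ∀ φ : PowerSeries R,
      psubst (-(PowerSeries.X * ι)) φ = -(PowerSeries.X * ι) → φ = PowerSeries.X := by
    intro φ h
    have hg : constantCoeff (-(PowerSeries.X * ι)) = 0 := by
      rw [map_neg, map_mul, neg_eq_zero]
      exact mul_eq_zero_of_left PowerSeries.constantCoeff_X _
    rw [psubst_eq_subst hg] at h
    exact hι.eq_X_of_subst_neg_X_mul_eq hF h
  refine ⟨hιι, hneg, fun φ _ h => hφ φ (h.trans hneg), fun φ _ h => hφ φ ?_⟩
  rwa [psubst_eq_subst hι.1, PowerSeries.subst_X (PowerSeries.HasSubst.of_constantCoeff_zero hι.1)]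
    at h
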